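/- Every ideal of R_a is principal; that is, R_a = (ZMod p^a)[X]/(X^n − 1) is a principal ideal ring. -/

import Mathlib

/-!
Put `B = R_a` and `t = p`. Then `t` is nilpotent and `B ⧸ (t) ≅ 𝔽_p[X] ⧸ (X ^ n - 1)` is
semisimple, because `X ^ n - 1` is separable over `𝔽_p` when `p ∤ n`. A prime `P` of `B` contains
`t`, and its image in `B ⧸ (t)` is generated by an idempotent, which lifts to an idempotent `e`
of `B` since `(t)` is a nil ideal. Hence `P = (e, t) = (e + t (1 - e))`, and a ring whose prime
ideals are principal is a principal ideal ring.
-/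

open Polynomial

theorem Ideal.span_pair_eq_span_singleton_of_isIdempotentElem {B : Type*} [CommRing B]
    {e : B} (he : IsIdempotentElem e) (t : B) :
    Ideal.span {e, t} = Ideal.span {e + t * (1 - e)} := by
  refine le_antisymm ?_ ?_
  · rw [Ideal.span_le, Set.insert_subset_iff, Set.singleton_subset_iff]
    refine ⟨Ideal.mem_span_singleton'.2 ⟨e, ?_⟩, Ideal.mem_span_singleton'.2 ⟨t * e + 1 - e, ?_⟩⟩
    · linear_combination (1 - t) * he.eq
    · linear_combination -(1 - t) ^ 2 * he.eq
  · rw [Ideal.span_singleton_le_iff_mem]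
    exact Ideal.mem_span_pair.2 ⟨1, 1 - e, by ring⟩

theorem Ideal.comap_mk_span_singleton {B : Type*} [CommRing B] (t x : B) :
    (Ideal.span {Ideal.Quotient.mk (Ideal.span {t}) x}).comap (Ideal.Quotient.mk _) =
      Ideal.span {x, t} := by
  rw [← Set.image_singleton, ← Ideal.map_span,
    Ideal.comap_map_of_surjective' _ Ideal.Quotient.mk_surjective, Ideal.mk_ker,
    Ideal.span_insert]

theorem IsPrincipalIdealRing.of_isNilpotent_of_isSemisimpleRing_quotient {B : Type*}
    [CommRing B] {t : B} (ht : IsNilpotent t) [IsSemisimpleRing (B ⧸ Ideal.span {t})] :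
    IsPrincipalIdealRing B := by
  refine .of_prime fun P hP => ⟨?_⟩
  have htP : Ideal.span {t} ≤ P := by
    obtain ⟨k, hk⟩ := ht
    exact (Ideal.span_singleton_le_iff_mem P).2 (hP.mem_of_pow_mem k (hk ▸ P.zero_mem))
  have hker : ∀ x ∈ RingHom.ker (Ideal.Quotient.mk (Ideal.span {t})), IsNilpotent x := by
    intro x hx
    obtain ⟨c, rfl⟩ := Ideal.mem_span_singleton'.1 ((Ideal.mk_ker).le hx)
    exact (Commute.all c t).isNilpotent_mul_left ht
  obtain ⟨ε, hε, hPε⟩ :=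
    IsSemisimpleRing.ideal_eq_span_idempotent (P.map (Ideal.Quotient.mk (Ideal.span {t})))
  obtain ⟨e, he, rfl⟩ := exists_isIdempotentElem_eq_of_ker_isNilpotent _ hker ε
    (Ideal.Quotient.mk_surjective ε) hε
  refine ⟨e + t * (1 - e), ?_⟩
  rw [Ideal.submodule_span_eq, ← Ideal.span_pair_eq_span_singleton_of_isIdempotentElem he,
    ← Ideal.comap_mk_span_singleton, ← hPε, Ideal.comap_map_mk htP]

theorem Polynomial.Separable.isSemisimpleRing_adjoinRoot {K : Type*} [Field K] {f : K[X]}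
    (hf : f.Separable) : IsSemisimpleRing (AdjoinRoot f) := by
  have : IsReduced (AdjoinRoot f) :=
    (Ideal.isRadical_iff_quotient_reduced _).1
      (isRadical_iff_span_singleton.1 hf.squarefree.isRadical)
  have : Module.Finite K (AdjoinRoot f) := (AdjoinRoot.powerBasis hf.ne_zero).finite
  have : IsArtinianRing (AdjoinRoot f) := .of_finite K _
  exact IsArtinianRing.isSemisimpleRing_of_isReduced _

theorem ZMod.ker_castHom {m n : ℕ} (h : m ∣ n) :
    RingHom.ker (ZMod.castHom h (ZMod m)) = Ideal.span {(m : ZMod n)} := by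
  refine le_antisymm (fun x hx => ?_) ?_
  · rw [← ZMod.intCast_zmod_cast x] at hx ⊢
    rw [RingHom.mem_ker, map_intCast, ZMod.intCast_zmod_eq_zero_iff_dvd] at hx
    obtain ⟨k, hk⟩ := hx
    exact Ideal.mem_span_singleton.2 ⟨k, by rw [hk]; push_cast; rfl⟩
  · rw [Ideal.span_singleton_le_iff_mem, RingHom.mem_ker, map_natCast, ZMod.natCast_self]

theorem stmt11_general (p : ℕ) [Fact p.Prime] (a n : ℕ) (ha : 0 < a) (hpn : ¬ p ∣ n) :
    IsPrincipalIdealRing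
      (Polynomial (ZMod (p ^ a)) ⧸ Ideal.span {(X : Polynomial (ZMod (p ^ a))) ^ n - 1}) := by
  set f : (ZMod (p ^ a))[X] := X ^ n - 1
  -- `(p)` presented as a kernel, so that its maximality is immediate
  set I := RingHom.ker (ZMod.castHom (dvd_pow_self p ha.ne') (ZMod p))
  have : I.IsMaximal := RingHom.ker_isMaximal_of_surjective _ (ZMod.castHom_surjective _)
  let := Ideal.Quotient.field I
  have hn : (n : ZMod (p ^ a) ⧸ I) ≠ 0 := by
    rw [← map_natCast (Ideal.Quotient.mk I), Ne, Ideal.Quotient.eq_zero_iff_mem, RingHom.mem_ker,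
      map_natCast, ZMod.natCast_eq_zero_iff]
    exact hpn
  have hsep : (f.map (Ideal.Quotient.mk I)).Separable := by
    simpa [f] using separable_X_pow_sub_C (1 : ZMod (p ^ a) ⧸ I) hn one_ne_zero
  have hI : I.map (AdjoinRoot.of f) = Ideal.span {(p : AdjoinRoot f)} := by
    rw [show I = _ from ZMod.ker_castHom _, Ideal.map_span, Set.image_singleton, map_natCast]
  have : IsSemisimpleRing (AdjoinRoot f ⧸ Ideal.span {(p : AdjoinRoot f)}) :=
    hI ▸ (AdjoinRoot.quotEquivQuotMap f I).toRingEquiv.isSemisimpleRing_iff.2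
      hsep.isSemisimpleRing_adjoinRoot
  refine IsPrincipalIdealRing.of_isNilpotent_of_isSemisimpleRing_quotient (B := AdjoinRoot f)
    (t := p) ⟨a, ?_⟩
  rw [← Nat.cast_pow, ← map_natCast (AdjoinRoot.of f), ZMod.natCast_self, map_zero]

theorem stmt11 (p : ℕ) [Fact p.Prime] (a n : ℕ) (ha : 0 < a) (hn : 0 < n) (hpn : ¬ p ∣ n) :
    IsPrincipalIdealRing
      (Polynomial (ZMod (p ^ a)) ⧸ Ideal.span {(X : Polynomial (ZMod (p ^ a))) ^ n - 1}) :=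
  stmt11_general p a n ha hpn
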